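/- arXiv:2307.13165 — 3 statements merged into one kernel-verified Lean document; each statement's English description precedes it below -/
import Mathlib

section
/- Let I be a finite set of items with |I| = N, let p ∈ (0,1), and let k be a positive integer with ⌊N/2⌋ < k ≤ N. Then for every pair of length-k rankings X, Y into I, RBO(X,Y)@k ≥ (1−p)·∑_{d=⌊N/2⌋+1}^{k} p^{d−1}·(2d − N)/d. -/
open Finset

/-- The set of the first `d` values of a ranking `X : Fin k → ι`. -/
def pref {ι : Type*} [DecidableEq ι] {k : ℕ} (X : Fin k → ι) (d : ℕ) : Finset ι :=
  (Finset.univ.filter fun i : Fin k => (i : ℕ) < d).image X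

/-- Rank-Biased Overlap at depth `k` with parameter `p`. -/
noncomputable def RBO {ι : Type*} [DecidableEq ι] {k : ℕ} (p : ℝ) (X Y : Fin k → ι) : ℝ :=
  (1 - p) * ∑ d ∈ Finset.Icc 1 k, p ^ (d - 1) * ((pref X d ∩ pref Y d).card : ℝ) / d

lemma card_pref {ι : Type*} [DecidableEq ι] {k : ℕ} (X : Fin k → ι)
    (hX : Function.Injective X) {d : ℕ} (hd : d ≤ k) : (pref X d).card = d := by
  rw [pref, Finset.card_image_of_injective _ hX]
  have : (Finset.univ.filter fun i : Fin k => (i : ℕ) < d).map Fin.valEmbedding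
      = Finset.range d := by
    ext n
    simp only [Finset.mem_map, Finset.mem_filter, Finset.mem_univ, true_and,
      Fin.valEmbedding_apply, Finset.mem_range]
    constructor
    · rintro ⟨i, hi, rfl⟩; exact hi
    · intro hn; exact ⟨⟨n, lt_of_lt_of_le hn hd⟩, hn, rfl⟩
  rw [← Finset.card_map Fin.valEmbedding, this, Finset.card_range]

theorem rbo_lower_bound {ι : Type*} [Fintype ι] [DecidableEq ι]
    (N : ℕ) (hN : Fintype.card ι = N) (p : ℝ) (hp : p ∈ Set.Ioo (0 : ℝ) 1)
    (k : ℕ) (hk1 : N / 2 < k) (hk2 : k ≤ N)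
    (X Y : Fin k → ι) (hX : Function.Injective X) (hY : Function.Injective Y) :
    (1 - p) * ∑ d ∈ Finset.Icc (N / 2 + 1) k, p ^ (d - 1) * (2 * (d : ℝ) - N) / d
      ≤ RBO p X Y := by
  obtain ⟨hp0, hp1⟩ := hp
  rw [RBO]
  apply mul_le_mul_of_nonneg_left _ (by linarith)
  have hnonneg : ∀ d ∈ Finset.Icc 1 k,
      (0:ℝ) ≤ p ^ (d - 1) * ((pref X d ∩ pref Y d).card : ℝ) / d := by
    intro d _
    positivity
  calc ∑ d ∈ Finset.Icc (N / 2 + 1) k, p ^ (d - 1) * (2 * (d : ℝ) - N) / d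
      ≤ ∑ d ∈ Finset.Icc (N / 2 + 1) k,
          p ^ (d - 1) * ((pref X d ∩ pref Y d).card : ℝ) / d := by
        apply Finset.sum_le_sum
        intro d hd
        rw [Finset.mem_Icc] at hd
        obtain ⟨hd1, hd2⟩ := hd
        have hcard : (2 * (d : ℝ) - N) ≤ ((pref X d ∩ pref Y d).card : ℝ) := by
          have h1 : (pref X d ∪ pref Y d).card ≤ N := by
            rw [← hN]; exact Finset.card_le_univ _
          have h2 := Finset.card_union_add_card_inter (pref X d) (pref Y d)
          have h3 : (pref X d).card = d := card_pref X hX hd2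
          have h4 : (pref Y d).card = d := card_pref Y hY hd2
          have : d + d ≤ N + (pref X d ∩ pref Y d).card := by omega
          have := (Nat.cast_le (α := ℝ)).2 this
          push_cast at this ⊢
          linarith
        have hd0 : (0:ℝ) < d := by
          have : 0 < d := by omega
          exact_mod_cast this
        have hpnn : (0:ℝ) ≤ p ^ (d - 1) := by positivity
        apply div_le_div_of_nonneg_right _ hd0.le
        exact mul_le_mul_of_nonneg_left hcard hpnn
    _ ≤ ∑ d ∈ Finset.Icc 1 k, p ^ (d - 1) * ((pref X d ∩ pref Y d).card : ℝ) / d := by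
        apply Finset.sum_le_sum_of_subset_of_nonneg
        · exact Finset.Icc_subset_Icc (by omega) le_rfl
        · intro d hd _; exact hnonneg d hd
end

section
/- Let I be a finite set of items with |I| = N ≥ 1 and let p ∈ (0,1). Then the minimum of RBO(X,Y)@N over all pairs of length-N rankings X, Y into I equals (1−p)·( 2·(p^{⌊N/2⌋} − p^{N})/(1−p) − N·ℓ ), where ℓ = p^{⌊N/2⌋}·∑_{n=0}^{∞} p^{n}/(n+⌊N/2⌋+1) − p^{N}·∑_{n=0}^{∞} p^{n}/(n+N+1). -/
open Finset

/-!
Two injective rankings of length `N` into a set of `N` items have prefixes of size `d` whose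
union has at most `N` elements, so they share at least `2d - N` of them; a ranking and its reverse
share exactly that many. Hence the minimum is attained at a ranking and its reverse, and it equals
`(1 - p) ∑_{d > ⌊N/2⌋} p^(d-1) (2d - N) / d`. Splitting `(2d - N)/d = 2 - N/d` gives a geometric
sum and a window of the series `∑ pᶦ/(i+1)`, which is the difference of the two tails in `ℓ`.
-/

theorem Fin.card_filter_val_lt_and_val_rev_lt {k d : ℕ} (hd : d ≤ k) :
    #{i : Fin k | (i : ℕ) < d ∧ (i.rev : ℕ) < d} = 2 * d - k := by
  rw [← card_map Fin.valEmbedding, map_filter', Fin.map_valEmbedding_univ]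
  have : {b ∈ Iio k | ∃ a : Fin k, ((a : ℕ) < d ∧ (a.rev : ℕ) < d) ∧ Fin.valEmbedding a = b}
      = Ico (k - d) d := by
    ext b
    simp only [mem_filter, mem_Iio, mem_Ico, Fin.valEmbedding_apply, Fin.val_rev]
    constructor
    · rintro ⟨-, a, ⟨h1, h2⟩, rfl⟩
      omega
    · rintro ⟨h1, h2⟩
      exact ⟨by omega, ⟨b, by omega⟩, ⟨by omega, by dsimp only; omega⟩, rfl⟩
  rw [this, Nat.card_Ico]
  omega

section Prefix

variable {ι : Type*} [DecidableEq ι] {k : ℕ} {X : Fin k → ι}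

theorem card_pref_of_injective (hX : Function.Injective X) (d : ℕ) :
    #(pref X d) = min k d := by
  rw [pref, card_image_of_injective _ hX, Fin.card_filter_val_lt]

theorem two_mul_le_card_pref_inter_add_card [Fintype ι] {Y : Fin k → ι}
    (hX : Function.Injective X) (hY : Function.Injective Y) {d : ℕ} (hd : d ≤ k) :
    2 * d ≤ #(pref X d ∩ pref Y d) + Fintype.card ι := by
  have := card_inter_add_card_union (pref X d) (pref Y d)
  have := card_le_univ (pref X d ∪ pref Y d)
  rw [card_pref_of_injective hX, card_pref_of_injective hY] at *
  omega

theorem card_pref_inter_pref_rev (hX : Function.Injective X) {d : ℕ} (hd : d ≤ k) :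
    #(pref X d ∩ pref (X ∘ Fin.rev) d) = 2 * d - k := by
  have hrev : pref (X ∘ Fin.rev) d = image X {i : Fin k | (i.rev : ℕ) < d} := by
    rw [pref, ← image_image]
    congr 1
    ext i
    simp only [mem_image, mem_filter, mem_univ, true_and]
    exact ⟨by rintro ⟨j, hj, rfl⟩; simpa, fun h => ⟨i.rev, h, Fin.rev_rev i⟩⟩
  rw [hrev, pref, ← image_inter _ _ hX, card_image_of_injective _ hX, ← filter_and,
    Fin.card_filter_val_lt_and_val_rev_lt hd]

-- `2 * d - N` is truncated subtraction: the least overlap at depth `d` is `max 0 (2d - N)`.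
noncomputable def minOverlapRBO (p : ℝ) (N : ℕ) : ℝ :=
  (1 - p) * ∑ d ∈ Icc 1 N, p ^ (d - 1) * ((2 * d - N : ℕ) : ℝ) / d

theorem RBO_comp_rev (p : ℝ) (hX : Function.Injective X) :
    RBO p X (X ∘ Fin.rev) = minOverlapRBO p k := by
  unfold RBO minOverlapRBO
  congr 1
  refine sum_congr rfl fun d hd => ?_
  rw [card_pref_inter_pref_rev hX (mem_Icc.1 hd).2]

theorem minOverlapRBO_le_RBO [Fintype ι] (hk : Fintype.card ι = k) {p : ℝ} (hp0 : 0 ≤ p)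
    (hp1 : p ≤ 1) {Y : Fin k → ι} (hX : Function.Injective X) (hY : Function.Injective Y) :
    minOverlapRBO p k ≤ RBO p X Y := by
  unfold RBO minOverlapRBO
  have : 0 ≤ 1 - p := sub_nonneg.2 hp1
  gcongr with d hd
  have := two_mul_le_card_pref_inter_add_card hX hY (mem_Icc.1 hd).2
  exact_mod_cast (by omega)

end Prefix

theorem summable_pow_div_succ {p : ℝ} (hp0 : 0 ≤ p) (hp1 : p < 1) :
    Summable fun i : ℕ => p ^ i / ((i : ℝ) + 1) :=
  (summable_geometric_of_lt_one hp0 hp1).of_nonneg_of_le (fun _ => by positivity)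
    fun i => div_le_self (by positivity) (by simp)

theorem pow_mul_tsum_pow_div_add_succ {p : ℝ} (hp0 : 0 ≤ p) (hp1 : p < 1) (k : ℕ) :
    p ^ k * ∑' j : ℕ, p ^ j / ((j : ℝ) + k + 1)
      = ∑' i : ℕ, p ^ i / ((i : ℝ) + 1) - ∑ i ∈ range k, p ^ i / ((i : ℝ) + 1) := by
  rw [← (summable_pow_div_succ hp0 hp1).sum_add_tsum_nat_add k, add_sub_cancel_left,
    ← tsum_mul_left]
  congr 1 with j
  push_cast
  ring

theorem sum_Ico_pow_div_succ {p : ℝ} (hp0 : 0 ≤ p) (hp1 : p < 1) {m n : ℕ} (hmn : m ≤ n) :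
    ∑ i ∈ Ico m n, p ^ i / ((i : ℝ) + 1)
      = p ^ m * ∑' j : ℕ, p ^ j / ((j : ℝ) + m + 1)
        - p ^ n * ∑' j : ℕ, p ^ j / ((j : ℝ) + n + 1) := by
  rw [sum_Ico_eq_sub _ hmn, pow_mul_tsum_pow_div_add_succ hp0 hp1,
    pow_mul_tsum_pow_div_add_succ hp0 hp1]
  ring

theorem minOverlapRBO_eq {p : ℝ} (hp0 : 0 ≤ p) (hp1 : p < 1) (N : ℕ) :
    minOverlapRBO p N = (1 - p) * (2 * (p ^ (N / 2) - p ^ N) / (1 - p)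
      - N * (p ^ (N / 2) * ∑' n : ℕ, p ^ n / ((n : ℝ) + (N / 2 : ℕ) + 1)
        - p ^ N * ∑' n : ℕ, p ^ n / ((n : ℝ) + N + 1))) := by
  unfold minOverlapRBO
  congr 1
  have hmN : N / 2 ≤ N := Nat.div_le_self N 2
  have hlow : ∀ i ∈ range (N / 2),
      p ^ (i + 1 - 1) * ((2 * (i + 1) - N : ℕ) : ℝ) / (i + 1 : ℕ) = 0 := fun i hi => by
    rw [show 2 * (i + 1) - N = 0 by grind]
    simp
  have hhigh : ∀ i ∈ Ico (N / 2) N, p ^ (i + 1 - 1) * ((2 * (i + 1) - N : ℕ) : ℝ) / (i + 1 : ℕ)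
      = 2 * p ^ i - N * (p ^ i / ((i : ℝ) + 1)) := fun i hi => by
    rw [Nat.cast_sub (by grind)]
    field_simp
    push_cast
    ring
  have hreindex : ∀ f : ℕ → ℝ, ∑ d ∈ Icc 1 N, f d = ∑ i ∈ range N, f (i + 1) := fun f => by
    rw [range_eq_Ico, sum_Ico_add', zero_add, Ico_add_one_right_eq_Icc]
  rw [hreindex, ← sum_range_add_sum_Ico _ hmN, sum_eq_zero hlow, zero_add, sum_congr rfl hhigh,
    sum_sub_distrib, ← mul_sum, ← mul_sum, geom_sum_Ico' hp1.ne hmN,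
    sum_Ico_pow_div_succ hp0 hp1 hmN]
  ring

theorem rbo_min_at_depth_N_general {ι : Type*} [Fintype ι] [DecidableEq ι]
    (N : ℕ) (hN : Fintype.card ι = N)
    (p : ℝ) (hp : p ∈ Set.Ioo (0 : ℝ) 1) :
    IsLeast {r : ℝ | ∃ X Y : Fin N → ι, Function.Injective X ∧ Function.Injective Y ∧
        RBO p X Y = r}
      ((1 - p) * (2 * (p ^ (N / 2) - p ^ N) / (1 - p)
        - N * (p ^ (N / 2) * ∑' n : ℕ, p ^ n / ((n : ℝ) + (N / 2 : ℕ) + 1)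
          - p ^ N * ∑' n : ℕ, p ^ n / ((n : ℝ) + N + 1)))) := by
  obtain ⟨hp0, hp1⟩ := hp
  rw [← minOverlapRBO_eq hp0.le hp1]
  let E : Fin N ≃ ι := (Fintype.equivFinOfCardEq hN).symm
  refine ⟨⟨E, E ∘ Fin.rev, E.injective, E.injective.comp Fin.rev_injective,
    RBO_comp_rev p E.injective⟩, ?_⟩
  rintro _ ⟨X, Y, hX, hY, rfl⟩
  exact minOverlapRBO_le_RBO hN hp0.le hp1.le hX hY

theorem rbo_min_at_depth_N {ι : Type*} [Fintype ι] [DecidableEq ι]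
    (N : ℕ) (hN : Fintype.card ι = N) (hN1 : 1 ≤ N)
    (p : ℝ) (hp : p ∈ Set.Ioo (0 : ℝ) 1) :
    IsLeast {r : ℝ | ∃ X Y : Fin N → ι, Function.Injective X ∧ Function.Injective Y ∧
        RBO p X Y = r}
      ((1 - p) * (2 * (p ^ (N / 2) - p ^ N) / (1 - p)
        - N * (p ^ (N / 2) * ∑' n : ℕ, p ^ n / ((n : ℝ) + (N / 2 : ℕ) + 1)
          - p ^ N * ∑' n : ℕ, p ^ n / ((n : ℝ) + N + 1)))) :=
  rbo_min_at_depth_N_general N hN p hp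
end

section
/- Let I be a finite set of items with |I| = N, let p ∈ (0,1), and let k be a positive integer with ⌊N/2⌋ < k ≤ N. Then the maximum of RBO@k over pairs of length-k rankings is strictly less than 1, and the minimum of RBO@k over pairs of length-k rankings is strictly greater than 0; i.e., for all length-k rankings X, Y one has 0 < RBO(X,Y)@k ≤ 1 − p^{k} < 1. -/
open Finset

lemma filt_card {k d : ℕ} (hd : d ≤ k) :
    (Finset.univ.filter fun i : Fin k => (i : ℕ) < d).card = d := by
  have himg : ((Finset.univ.filter fun i : Fin k => (i : ℕ) < d).image Fin.val) =
      Finset.range d := by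
    ext b
    simp only [Finset.mem_image, Finset.mem_filter, Finset.mem_univ, true_and,
      Finset.mem_range]
    constructor
    · rintro ⟨a, ha, rfl⟩; exact ha
    · intro hb; exact ⟨⟨b, lt_of_lt_of_le hb hd⟩, hb, rfl⟩
  calc (Finset.univ.filter fun i : Fin k => (i : ℕ) < d).card
      = ((Finset.univ.filter fun i : Fin k => (i : ℕ) < d).image Fin.val).card :=
        (Finset.card_image_of_injective _ Fin.val_injective).symm
    _ = d := by rw [himg, Finset.card_range]

lemma pref_card {ι : Type*} [DecidableEq ι] {k : ℕ} {X : Fin k → ι}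
    (hX : Function.Injective X) {d : ℕ} (hd : d ≤ k) : (pref X d).card = d := by
  rw [pref, Finset.card_image_of_injective _ hX, filt_card hd]

theorem rbo_strict_bounds {ι : Type*} [Fintype ι] [DecidableEq ι]
    (N : ℕ) (hN : Fintype.card ι = N) (p : ℝ) (hp : p ∈ Set.Ioo (0 : ℝ) 1)
    (k : ℕ) (hk1 : N / 2 < k) (hk2 : k ≤ N) :
    (∀ X Y : Fin k → ι, Function.Injective X → Function.Injective Y →
        0 < RBO p X Y ∧ RBO p X Y ≤ 1 - p ^ k) ∧
    1 - p ^ k < (1 : ℝ) := by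
  obtain ⟨hp0, hp1⟩ := hp
  have hk0 : 0 < k := lt_of_le_of_lt (Nat.zero_le _) hk1
  have h2k : N < 2 * k := by omega
  constructor
  · intro X Y hX hY
    -- nonnegativity of each term
    have hterm_nonneg : ∀ d ∈ Finset.Icc 1 k,
        0 ≤ p ^ (d - 1) * ((pref X d ∩ pref Y d).card : ℝ) / d := by
      intro d _
      apply div_nonneg (mul_nonneg (pow_nonneg hp0.le _) (Nat.cast_nonneg _))
        (Nat.cast_nonneg _)
    -- positivity of the term at d = k
    have hinter : 0 < (pref X k ∩ pref Y k).card := by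
      have h1 := Finset.card_union_add_card_inter (pref X k) (pref Y k)
      have h2 : (pref X k ∪ pref Y k).card ≤ N := by
        rw [← hN]; exact Finset.card_le_univ _
      rw [pref_card hX le_rfl, pref_card hY le_rfl] at h1
      omega
    constructor
    · -- lower bound
      have hsum : 0 < ∑ d ∈ Finset.Icc 1 k,
          p ^ (d - 1) * ((pref X d ∩ pref Y d).card : ℝ) / d := by
        apply Finset.sum_pos' hterm_nonneg
        refine ⟨k, Finset.mem_Icc.mpr ⟨hk0, le_rfl⟩, ?_⟩
        apply div_pos (mul_pos (pow_pos hp0 _) (by exact_mod_cast hinter))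
          (by exact_mod_cast hk0)
      exact mul_pos (by linarith) hsum
    · -- upper bound
      have hle : ∑ d ∈ Finset.Icc 1 k,
          p ^ (d - 1) * ((pref X d ∩ pref Y d).card : ℝ) / d
          ≤ ∑ d ∈ Finset.Icc 1 k, p ^ (d - 1) := by
        apply Finset.sum_le_sum
        intro d hd
        obtain ⟨hd1, hdk⟩ := Finset.mem_Icc.mp hd
        have hcard : ((pref X d ∩ pref Y d).card : ℝ) ≤ d := by
          have := Finset.card_le_card (Finset.inter_subset_left
            (s₁ := pref X d) (s₂ := pref Y d))
          rw [pref_card hX hdk] at this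
          exact_mod_cast this
        have hdpos : (0 : ℝ) < d := by exact_mod_cast hd1
        rw [div_le_iff₀ hdpos]
        exact mul_le_mul_of_nonneg_left hcard (pow_nonneg hp0.le _)
      have hgeom : ∑ d ∈ Finset.Icc 1 k, p ^ (d - 1) = ∑ i ∈ Finset.range k, p ^ i := by
        refine Finset.sum_nbij' (fun d => d - 1) (fun i => i + 1) ?_ ?_ ?_ ?_ ?_ <;>
          simp only [Finset.mem_Icc, Finset.mem_range] <;> intros <;> first | omega | trivial
      have hgs := geom_sum_mul p k
      have : (1 - p) * ∑ d ∈ Finset.Icc 1 k, p ^ (d - 1) = 1 - p ^ k := by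
        rw [hgeom]; nlinarith [hgs]
      calc RBO p X Y ≤ (1 - p) * ∑ d ∈ Finset.Icc 1 k, p ^ (d - 1) := by
            unfold RBO
            exact mul_le_mul_of_nonneg_left hle (by linarith)
        _ = 1 - p ^ k := this
  · have := pow_pos hp0 k
    linarith
end
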